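/- arXiv:2107.03793 — 5 statements merged into one kernel-verified Lean document; each statement's English description precedes it below -/
import Mathlib

section
/- Every finite digraph has a quasi-kernel, i.e., an independent set Q of vertices such that every vertex has a directed path of length at most 2 to some vertex of Q. -/
/-- A directed path of length at most 2 from `v` to `w` in the digraph with arc
relation `A`. -/
def Reach2 {V : Type*} (A : V → V → Prop) (v w : V) : Prop :=
  w = v ∨ A v w ∨ ∃ x, A v x ∧ A x w

/-- `Q` is independent in the digraph with arc relation `A`. -/
def Indep {V : Type*} (A : V → V → Prop) (Q : Set V) : Prop :=
  ∀ u ∈ Q, ∀ v ∈ Q, u ≠ v → ¬ A u v ∧ ¬ A v u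

/-- `Q` is a quasi-kernel: independent and every vertex reaches `Q` within distance 2. -/
def IsQuasiKernel {V : Type*} (A : V → V → Prop) (Q : Set V) : Prop :=
  Indep A Q ∧ ∀ v, ∃ w ∈ Q, Reach2 A v w

private lemma quasiKernel_aux {V : Type*} [DecidableEq V] (A : V → V → Prop)
    (S : Finset V) : ∃ Q : Set V, (∀ q ∈ Q, q ∈ S) ∧ Indep A Q ∧
      ∀ v ∈ S, ∃ w ∈ Q, w = v ∨ A v w ∨ ∃ x ∈ S, A v x ∧ A x w := by
  classical
  induction S using Finset.strongInduction with
  | _ S ih =>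
    rcases S.eq_empty_or_nonempty with rfl | ⟨v, hv⟩
    · exact ⟨∅, by simp, fun u hu => absurd hu (by simp), by simp⟩
    · set S' := S.filter (fun u => u ≠ v ∧ ¬ A u v) with hS'
      have hvS' : v ∉ S' := by simp [hS']
      have hss : S' ⊂ S :=
        Finset.ssubset_iff_of_subset (Finset.filter_subset _ _) |>.2 ⟨v, hv, hvS'⟩
      obtain ⟨Q', hQ'sub, hQ'ind, hQ'dom⟩ := ih S' hss
      have hQ'S : ∀ q ∈ Q', q ∈ S := fun q hq => Finset.filter_subset _ _ (hQ'sub q hq)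
      have hsub' : ∀ u ∈ S, u ∉ S' → u = v ∨ A u v := by
        intro u hu hu'
        by_contra h
        push_neg at h
        exact hu' (Finset.mem_filter.2 ⟨hu, h.1, h.2⟩)
      by_cases hcase : ∃ q ∈ Q', A v q
      · obtain ⟨q, hq, hvq⟩ := hcase
        refine ⟨Q', hQ'S, hQ'ind, fun u hu => ?_⟩
        by_cases hu' : u ∈ S'
        · obtain ⟨w, hw, hr⟩ := hQ'dom u hu'
          refine ⟨w, hw, ?_⟩
          rcases hr with h | h | ⟨x, hx, hax⟩
          · exact Or.inl h
          · exact Or.inr (Or.inl h)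
          · exact Or.inr (Or.inr ⟨x, Finset.filter_subset _ _ hx, hax⟩)
        · rcases hsub' u hu hu' with rfl | huv
          · exact ⟨q, hq, Or.inr (Or.inl hvq)⟩
          · exact ⟨q, hq, Or.inr (Or.inr ⟨v, hv, huv, hvq⟩)⟩
      · push_neg at hcase
        refine ⟨insert v Q', ?_, ?_, ?_⟩
        · rintro q hq
          rcases hq with rfl | hq
          · exact hv
          · exact hQ'S q hq
        · rintro a ha b hb hab
          rcases ha with rfl | ha <;> rcases hb with rfl | hb
          · exact absurd rfl hab
          · exact ⟨hcase b hb, (Finset.mem_filter.1 (hQ'sub b hb)).2.2⟩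
          · exact ⟨(Finset.mem_filter.1 (hQ'sub a ha)).2.2, hcase a ha⟩
          · exact hQ'ind a ha b hb hab
        · intro u hu
          by_cases hu' : u ∈ S'
          · obtain ⟨w, hw, hr⟩ := hQ'dom u hu'
            refine ⟨w, Set.mem_insert_of_mem _ hw, ?_⟩
            rcases hr with h | h | ⟨x, hx, hax⟩
            · exact Or.inl h
            · exact Or.inr (Or.inl h)
            · exact Or.inr (Or.inr ⟨x, Finset.filter_subset _ _ hx, hax⟩)
          · rcases hsub' u hu hu' with rfl | huv
            · exact ⟨u, Set.mem_insert _ _, Or.inl rfl⟩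
            · exact ⟨v, Set.mem_insert _ _, Or.inr (Or.inl huv)⟩

/-- Every finite loopless digraph has a quasi-kernel. -/
theorem every_finite_digraph_has_quasiKernel
    {V : Type*} [Fintype V] (A : V → V → Prop) (hirr : ∀ v, ¬ A v v) :
    ∃ Q : Set V, IsQuasiKernel A Q := by
  classical
  obtain ⟨Q, -, hind, hdom⟩ := quasiKernel_aux A (Finset.univ : Finset V)
  refine ⟨Q, hind, fun v => ?_⟩
  obtain ⟨w, hw, hr⟩ := hdom v (Finset.mem_univ v)
  refine ⟨w, hw, ?_⟩
  rcases hr with h | h | ⟨x, -, hax⟩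
  · exact Or.inl h
  · exact Or.inr (Or.inl h)
  · exact Or.inr (Or.inr ⟨x, hax⟩)
end

section
/- Let G = (V, E) be a finite undirected graph without isolated vertices, and let D be the digraph obtained from G by: for each vertex v_i of G introducing a directed 3-cycle w_i → z_{i,1} → z_{i,2} → w_i, and for each edge v_i v_j ∈ E adding both arcs (w_i, w_j) and (w_j, w_i). If G has a proper 3-coloring, then D has three pairwise disjoint quasi-kernels. -/
/-- The digraph obtained from an undirected graph `G`: for each vertex `i` a directed
3-cycle `(i,0) → (i,1) → (i,2) → (i,0)`, and both arcs `(i,0) ↔ (j,0)` for each edge. -/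
def coloringDigraph {V : Type*} (G : SimpleGraph V) : (V × Fin 3) → (V × Fin 3) → Prop :=
  fun p q =>
    (p.2 = 0 ∧ q.2 = 0 ∧ G.Adj p.1 q.1) ∨
    (p.1 = q.1 ∧ ((p.2 = 0 ∧ q.2 = 1) ∨ (p.2 = 1 ∧ q.2 = 2) ∨ (p.2 = 2 ∧ q.2 = 0)))

lemma cd_step {V : Type*} (G : SimpleGraph V) (i : V) (s : Fin 3) :
    coloringDigraph G (i, s) (i, s + 1) := by
  right
  exact ⟨rfl, by fin_cases s <;> simp <;> decide⟩

lemma qk_aux {V : Type*} [Fintype V] (G : SimpleGraph V)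
    (c : V → Fin 3) (hc : ∀ {u v : V}, G.Adj u v → c u ≠ c v) (k : Fin 3) :
    IsQuasiKernel (coloringDigraph G) {p : V × Fin 3 | c p.1 + p.2 = k} := by
  constructor
  · have key : ∀ p ∈ {p : V × Fin 3 | c p.1 + p.2 = k},
        ∀ q ∈ {p : V × Fin 3 | c p.1 + p.2 = k}, p ≠ q → ¬ coloringDigraph G p q := by
      rintro p hp q hq hne (⟨h1, h2, hadj⟩ | ⟨h1, h2⟩)
      · apply hc hadj
        simp only [Set.mem_setOf_eq, h1, h2, add_zero] at hp hq
        rw [hp, hq]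
      · simp only [Set.mem_setOf_eq, h1] at hp hq
        have h3 : p.2 = q.2 := by
          have := hp.trans hq.symm
          exact add_left_cancel this
        rcases h2 with ⟨ha, hb⟩ | ⟨ha, hb⟩ | ⟨ha, hb⟩ <;>
          rw [ha, hb] at h3 <;> exact absurd h3 (by decide)
    exact fun p hp q hq hne => ⟨key p hp q hq hne, key q hq p hp hne.symm⟩
  · rintro ⟨i, s⟩
    refine ⟨(i, k - c i), by simp [Set.mem_setOf_eq], ?_⟩
    have h : k - c i = s ∨ k - c i = s + 1 ∨ k - c i = s + 1 + 1 := by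
      generalize k - c i = t
      fin_cases s <;> fin_cases t <;> simp <;> decide
    rcases h with h | h | h
    · exact Or.inl (by rw [h])
    · exact Or.inr (Or.inl (h ▸ cd_step G i s))
    · exact Or.inr (Or.inr ⟨(i, s + 1), cd_step G i s, h ▸ cd_step G i (s + 1)⟩)

lemma qk_disj {V : Type*} (c : V → Fin 3) {k l : Fin 3} (h : k ≠ l) :
    Disjoint {p : V × Fin 3 | c p.1 + p.2 = k} {p : V × Fin 3 | c p.1 + p.2 = l} := by
  rw [Set.disjoint_left]
  rintro p hp hq
  exact h (hp.symm.trans hq)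

/-- If `G` has no isolated vertex and has a proper 3-coloring, then the associated
digraph has three pairwise disjoint quasi-kernels. -/
theorem three_disjoint_quasiKernels_of_coloring {V : Type*} [Fintype V]
    (G : SimpleGraph V) (hiso : ∀ v : V, ∃ u, G.Adj v u)
    (c : V → Fin 3) (hc : ∀ {u v : V}, G.Adj u v → c u ≠ c v) :
    ∃ Q₁ Q₂ Q₃ : Set (V × Fin 3),
      IsQuasiKernel (coloringDigraph G) Q₁ ∧
      IsQuasiKernel (coloringDigraph G) Q₂ ∧
      IsQuasiKernel (coloringDigraph G) Q₃ ∧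
      Disjoint Q₁ Q₂ ∧ Disjoint Q₁ Q₃ ∧ Disjoint Q₂ Q₃ :=
  ⟨_, _, _, qk_aux G c hc 0, qk_aux G c hc 1, qk_aux G c hc 2,
    qk_disj c (by decide), qk_disj c (by decide), qk_disj c (by decide)⟩
end

section
/- Let G = (V, E) be a finite undirected graph and let D be the digraph with vertex set {w_i, z_{i,1}, z_{i,2} : v_i ∈ V} and arcs (w_i, w_j), (w_j, w_i) for each edge v_i v_j ∈ E, plus (w_i, z_{i,1}), (z_{i,1}, z_{i,2}), (z_{i,2}, w_i) for each i. If D has three pairwise disjoint quasi-kernels, then G has a proper 3-coloring. -/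
lemma fin3_pigeonhole : ∀ k₁ k₂ k₃ : Fin 3, k₁ ≠ k₂ → k₁ ≠ k₃ → k₂ ≠ k₃ →
    k₁ = 0 ∨ k₂ = 0 ∨ k₃ = 0 := by decide

lemma qk_hits {V : Type*} (G : SimpleGraph V) {Q : Set (V × Fin 3)}
    (h : IsQuasiKernel (coloringDigraph G) Q) (i : V) : ∃ k : Fin 3, (i, k) ∈ Q := by
  obtain ⟨w, hwQ, hr⟩ := h.2 (i, 1)
  rcases hr with h | h | ⟨x, hx, hxw⟩
  · exact ⟨1, h ▸ hwQ⟩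
  · rcases h with ⟨h, _⟩ | ⟨h1, h⟩
    · simp at h
    · rcases h with ⟨h, _⟩ | ⟨_, h⟩ | ⟨h, _⟩
      · simp at h
      · exact ⟨2, (Prod.ext (by simpa using h1.symm) h : w = (i, 2)) ▸ hwQ⟩
      · simp at h
  · have hx2 : x = (i, 2) := by
      rcases hx with ⟨h, _⟩ | ⟨h1, h⟩
      · simp at h
      · rcases h with ⟨h, _⟩ | ⟨_, h⟩ | ⟨h, _⟩
        · simp at h
        · exact Prod.ext (by simpa using h1.symm) h
        · simp at h
    subst hx2
    rcases hxw with ⟨h, _⟩ | ⟨h1, h⟩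
    · simp at h
    · rcases h with ⟨h, _⟩ | ⟨h, _⟩ | ⟨_, h⟩
      · simp at h
      · simp at h
      · exact ⟨0, (Prod.ext (by simpa using h1.symm) h : w = (i, 0)) ▸ hwQ⟩

/-- If the associated digraph has three pairwise disjoint quasi-kernels, then `G` has a
proper 3-coloring. -/
theorem coloring_of_three_disjoint_quasiKernels {V : Type*} [Fintype V]
    (G : SimpleGraph V) (Q₁ Q₂ Q₃ : Set (V × Fin 3))
    (h₁ : IsQuasiKernel (coloringDigraph G) Q₁)
    (h₂ : IsQuasiKernel (coloringDigraph G) Q₂)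
    (h₃ : IsQuasiKernel (coloringDigraph G) Q₃)
    (h₁₂ : Disjoint Q₁ Q₂) (h₁₃ : Disjoint Q₁ Q₃) (h₂₃ : Disjoint Q₂ Q₃) :
    ∃ c : V → Fin 3, ∀ {u v : V}, G.Adj u v → c u ≠ c v := by
  classical
  have hmem : ∀ i : V, (i, (0 : Fin 3)) ∈ Q₁ ∪ Q₂ ∪ Q₃ := by
    intro i
    obtain ⟨k₁, hk₁⟩ := qk_hits G h₁ i
    obtain ⟨k₂, hk₂⟩ := qk_hits G h₂ i
    obtain ⟨k₃, hk₃⟩ := qk_hits G h₃ i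
    have d12 : k₁ ≠ k₂ := fun h => h₁₂.ne_of_mem hk₁ hk₂ (by rw [h])
    have d13 : k₁ ≠ k₃ := fun h => h₁₃.ne_of_mem hk₁ hk₃ (by rw [h])
    have d23 : k₂ ≠ k₃ := fun h => h₂₃.ne_of_mem hk₂ hk₃ (by rw [h])
    rcases fin3_pigeonhole k₁ k₂ k₃ d12 d13 d23 with h | h | h
    · exact Or.inl (Or.inl (h ▸ hk₁))
    · exact Or.inl (Or.inr (h ▸ hk₂))
    · exact Or.inr (h ▸ hk₃)
  refine ⟨fun i => if (i, (0:Fin 3)) ∈ Q₁ then 0 else if (i, (0:Fin 3)) ∈ Q₂ then 1 else 2, ?_⟩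
  intro u v huv heq
  have key : ∀ Q : Set (V × Fin 3), Indep (coloringDigraph G) Q →
      (u, (0:Fin 3)) ∈ Q → (v, (0:Fin 3)) ∈ Q → False := by
    intro Q hQ hu hv
    have hne : ((u, (0:Fin 3)) : V × Fin 3) ≠ (v, 0) := by
      intro h; exact huv.ne (congrArg Prod.fst h)
    exact (hQ _ hu _ hv hne).1 (Or.inl ⟨rfl, rfl, huv⟩)
  by_cases hu1 : (u, (0:Fin 3)) ∈ Q₁ <;> by_cases hv1 : (v, (0:Fin 3)) ∈ Q₁ <;>
    by_cases hu2 : (u, (0:Fin 3)) ∈ Q₂ <;> by_cases hv2 : (v, (0:Fin 3)) ∈ Q₂ <;>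
    simp only [hu1, hv1, hu2, hv2, if_true, if_false] at heq
  all_goals first
  | exact key _ h₁.1 hu1 hv1
  | exact key _ h₂.1 hu2 hv2
  | exact absurd heq (by decide)
  | (have hu3 : (u, (0:Fin 3)) ∈ Q₃ := by
      rcases hmem u with (h | h) | h <;> first | exact h | exact absurd h (by assumption)
     have hv3 : (v, (0:Fin 3)) ∈ Q₃ := by
      rcases hmem v with (h | h) | h <;> first | exact h | exact absurd h (by assumption)
     exact key _ h₃.1 hu3 hv3)
end

section
/- Let D be the digraph built from a set-cover instance: vertices are the sets F₁,…,F_m of a family 𝓕 over universe U = {u₁,…,u_n} with U = ⋃ F_j, the elements of U, and two extra vertices s and t; arcs are (u_i, F_j) whenever u_i ∈ F_j, (F_j, s) for all j, and (s, t). If 𝓕′ ⊆ 𝓕 is a set cover of U (every element of U lies in some member of 𝓕′), then 𝓕′ ∪ {t} is a quasi-kernel of D of size |𝓕′| + 1. -/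
/-- Vertices of the set-cover digraph: the sets `F j` (`Sum.inl j`), the elements of the
universe (`Sum.inr (Sum.inl u)`), and the two extra vertices `s = Sum.inr (Sum.inr false)`
and `t = Sum.inr (Sum.inr true)`. -/
abbrev SetCoverVertex (U : Type*) (m : ℕ) := Fin m ⊕ (U ⊕ Bool)

/-- Arcs of the set-cover digraph: `(u, F j)` whenever `u ∈ F j`, `(F j, s)` for all `j`,
and `(s, t)`. -/
def setCoverArc {U : Type*} {m : ℕ} (F : Fin m → Set U) :
    SetCoverVertex U m → SetCoverVertex U m → Prop
  | .inr (.inl u), .inl j => u ∈ F j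
  | .inl _, .inr (.inr false) => True
  | .inr (.inr false), .inr (.inr true) => True
  | _, _ => False

/-- If `𝓕' ⊆ 𝓕` is a set cover of `U`, then `𝓕' ∪ {t}` is a quasi-kernel of the
set-cover digraph of size `|𝓕'| + 1`. -/
theorem setCover_gives_quasiKernel {U : Type*} [DecidableEq U] {m : ℕ}
    (F : Fin m → Set U) (hU : ∀ u : U, ∃ j, u ∈ F j)
    (S : Finset (Fin m)) (hS : ∀ u : U, ∃ j ∈ S, u ∈ F j) :
    IsQuasiKernel (setCoverArc F)
      ↑(S.image (Sum.inl : Fin m → SetCoverVertex U m) ∪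
        {(Sum.inr (Sum.inr true) : SetCoverVertex U m)}) ∧
    (S.image (Sum.inl : Fin m → SetCoverVertex U m) ∪
        {(Sum.inr (Sum.inr true) : SetCoverVertex U m)}).card = S.card + 1 := by
  constructor
  · constructor
    · intro a ha b hb hab
      simp only [Finset.coe_union, Finset.coe_image, Finset.coe_singleton, Set.mem_union,
        Set.mem_image, Finset.mem_coe, Set.mem_singleton_iff] at ha hb
      rcases ha with ⟨j, _, rfl⟩ | rfl <;> rcases hb with ⟨k, _, rfl⟩ | rfl <;>
        simp_all [setCoverArc]
    · intro v
      match v with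
      | .inl j =>
        exact ⟨.inr (.inr true), by simp, Or.inr (Or.inr ⟨.inr (.inr false),
          trivial, trivial⟩)⟩
      | .inr (.inl u) =>
        obtain ⟨j, hj, hu⟩ := hS u
        exact ⟨.inl j, by simp [hj], Or.inr (Or.inl hu)⟩
      | .inr (.inr false) =>
        exact ⟨.inr (.inr true), by simp, Or.inr (Or.inl trivial)⟩
      | .inr (.inr true) =>
        exact ⟨.inr (.inr true), by simp, Or.inl rfl⟩
  · rw [Finset.card_union_of_disjoint (by simp), Finset.card_image_of_injective _
      Sum.inl_injective, Finset.card_singleton]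
end

section
/- Let D be the set-cover digraph as above (vertices 𝓕 ∪ U ∪ {s, t}; arcs (u_i, F_j) for u_i ∈ F_j, (F_j, s), and (s,t)), where U = ⋃_{j} F_j and all F_j are nonempty. If D has a quasi-kernel of size at most k+1, then 𝓕 has a set cover of size at most k. -/
lemma arc_cases {U : Type*} {m : ℕ} {F : Fin m → Set U} {a b : SetCoverVertex U m}
    (h : setCoverArc F a b) :
    (∃ u j, a = Sum.inr (Sum.inl u) ∧ b = Sum.inl j ∧ u ∈ F j) ∨
    (∃ j, a = Sum.inl j ∧ b = Sum.inr (Sum.inr false)) ∨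
    (a = Sum.inr (Sum.inr false) ∧ b = Sum.inr (Sum.inr true)) := by
  rcases a with j | u | x <;> rcases b with j' | u' | x' <;>
    first
      | (cases x <;> (try cases x') <;> simp_all [setCoverArc])
      | (try cases x') <;> simp_all [setCoverArc]

/-- If the set-cover digraph has a quasi-kernel of size at most `k + 1`, then `𝓕` has a
set cover of size at most `k`. -/
theorem quasiKernel_gives_setCover {U : Type*} [DecidableEq U] {m : ℕ}
    (F : Fin m → Set U) (hne : ∀ j, (F j).Nonempty) (hU : ∀ u : U, ∃ j, u ∈ F j)
    (k : ℕ) (Q : Finset (SetCoverVertex U m))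
    (hQ : IsQuasiKernel (setCoverArc F) ↑Q) (hcard : Q.card ≤ k + 1) :
    ∃ S : Finset (Fin m), (∀ u : U, ∃ j ∈ S, u ∈ F j) ∧ S.card ≤ k := by
  classical
  obtain ⟨hind, hreach⟩ := hQ
  set t : SetCoverVertex U m := Sum.inr (Sum.inr true) with ht
  set s : SetCoverVertex U m := Sum.inr (Sum.inr false) with hs
  -- t ∈ Q
  have htQ : t ∈ Q := by
    obtain ⟨w, hwQ, hw⟩ := hreach t
    rcases hw with rfl | h | ⟨x, hx, _⟩
    · exact hwQ
    · rcases arc_cases h with ⟨u, j, h1, _⟩ | ⟨j, h1, _⟩ | ⟨h1, _⟩ <;> simp [ht] at h1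
    · rcases arc_cases hx with ⟨u, j, h1, _⟩ | ⟨j, h1, _⟩ | ⟨h1, _⟩ <;> simp [ht] at h1
  have hsQ : s ∉ Q := by
    intro hsq
    have := hind s hsq t htQ (by simp [hs, ht])
    exact this.1 trivial
  -- the mapping
  let g : SetCoverVertex U m → Option (Fin m) := fun v =>
    match v with
    | .inl j => some j
    | .inr (.inl u) => some (hU u).choose
    | .inr (.inr _) => none
  let S : Finset (Fin m) := ((Q.erase t).image g).eraseNone
  have hmem : ∀ j : Fin m, j ∈ S ↔ some j ∈ (Q.erase t).image g := by
    intro j; simp [S, Finset.mem_eraseNone]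
  refine ⟨S, ?_, ?_⟩
  · intro u
    obtain ⟨w, hwQ, hw⟩ := hreach (Sum.inr (Sum.inl u))
    rcases hw with rfl | h | ⟨x, hx, hxw⟩
    · refine ⟨(hU u).choose, ?_, (hU u).choose_spec⟩
      rw [hmem]
      exact Finset.mem_image.2 ⟨Sum.inr (Sum.inl u),
        Finset.mem_erase.2 ⟨by simp [ht], hwQ⟩, rfl⟩
    · rcases arc_cases h with ⟨u', j, h1, h2, h3⟩ | ⟨j, h1, _⟩ | ⟨h1, _⟩
      · obtain rfl : u' = u := by injection h1 with h1'; injection h1' with h1''; exact h1''.symm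
        refine ⟨j, ?_, h3⟩
        rw [hmem]
        exact Finset.mem_image.2 ⟨Sum.inl j,
          Finset.mem_erase.2 ⟨by simp [ht], h2 ▸ hwQ⟩, by simp [g]⟩
      · simp at h1
      · simp at h1
    · exfalso
      rcases arc_cases hx with ⟨u', j, h1, h2, h3⟩ | ⟨j, h1, _⟩ | ⟨h1, _⟩
      · subst h2
        rcases arc_cases hxw with ⟨u'', j', h4, _⟩ | ⟨j', h4, h5⟩ | ⟨h4, _⟩
        · simp at h4
        · rw [h5] at hwQ; exact hsQ hwQ
        · simp at h4
      · simp at h1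
      · simp at h1
  · have h1 : S.card ≤ ((Q.erase t).image g).card :=
      Finset.card_le_card_of_injOn some (fun j hj => (hmem j).1 hj)
        (fun a _ b _ h => Option.some_injective _ h)
    have h2 : ((Q.erase t).image g).card ≤ (Q.erase t).card := Finset.card_image_le
    have h3 : (Q.erase t).card = Q.card - 1 := Finset.card_erase_of_mem htQ
    omega
end
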